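/- For every integer k ≥ 2, there are infinitely many positive integers n such that n = k · Z(n), i.e., the equation n/Z(n) = k has infinitely many solutions. -/

import Mathlib

/-- The m-th triangular number. -/
def T (m : ℕ) : ℕ := m * (m + 1) / 2

/-- The pseudo-Smarandache function: the least positive m with n ∣ T m. -/
noncomputable def Z (n : ℕ) : ℕ := sInf {m : ℕ | 0 < m ∧ n ∣ T m}

/-!
For a prime `p ≡ -1 (mod 2k)` we have `Z (k * p) = p`: indeed `2kp ∣ p (p + 1)`, and if
`2kp ∣ m (m + 1)` with `0 < m < p` then `m = p - 1`, which would force `2k ∣ p - 1` and hence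
`2k ∣ 2`. By Dirichlet's theorem there are infinitely many such primes, and `p ↦ k * p` is
injective.
-/

theorem two_mul_T (m : ℕ) : 2 * T m = m * (m + 1) :=
  Nat.mul_div_cancel' (Nat.even_mul_succ_self m).two_dvd

theorem dvd_T_iff {n m : ℕ} : n ∣ T m ↔ 2 * n ∣ m * (m + 1) := by
  rw [← two_mul_T, Nat.mul_dvd_mul_iff_left two_pos]

theorem Z_mul_prime_eq {k p : ℕ} (hk : 2 ≤ k) (hp : p.Prime) (hkp : 2 * k ∣ p + 1) :
    Z (k * p) = p := by
  refine IsLeast.csInf_eq ⟨⟨hp.pos, ?_⟩, ?_⟩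
  · rw [dvd_T_iff, ← mul_assoc, mul_comm p]
    exact mul_dvd_mul_right hkp p
  · rintro m ⟨hm, hdvd⟩
    rw [dvd_T_iff, ← mul_assoc] at hdvd
    rcases hp.dvd_mul.mp (dvd_of_mul_left_dvd hdvd) with hpm | hpm
    · exact Nat.le_of_dvd hm hpm
    · by_contra! hmp
      obtain rfl : m + 1 = p := le_antisymm hmp (Nat.le_of_dvd m.succ_pos hpm)
      have hkm : 2 * k ∣ m := Nat.dvd_of_mul_dvd_mul_right m.succ_pos hdvd
      have hk2 : 2 * k ∣ 2 := (Nat.dvd_add_right hkm).mp hkp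
      have := Nat.le_of_dvd two_pos hk2
      omega

theorem infinite_setOf_prime_add_one_dvd {d : ℕ} (hd : d ≠ 0) :
    {p : ℕ | p.Prime ∧ d ∣ p + 1}.Infinite := by
  have : NeZero d := ⟨hd⟩
  convert Nat.infinite_setOfPred_prime_and_eq_mod (q := d) isUnit_one.neg using 3 with p
  rw [eq_neg_iff_add_eq_zero, ← ZMod.natCast_eq_zero_iff]
  push_cast
  rfl

theorem stmt_11 (k : ℕ) (hk : 2 ≤ k) :
    {n : ℕ | 0 < n ∧ n = k * Z n}.Infinite := by
  have hprimes := infinite_setOf_prime_add_one_dvd (d := 2 * k) (by omega)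
  refine (hprimes.image (mul_right_injective₀ (by omega : k ≠ 0)).injOn).mono ?_
  rintro _ ⟨p, ⟨hp, hkp⟩, rfl⟩
  exact ⟨Nat.mul_pos (by omega) hp.pos, by rw [Z_mul_prime_eq hk hp hkp]⟩
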